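/- Let N₁, N₂ ≥ 0 with N₁ + N₂ ≥ 2. Let α ∈ GL₂(ℤ₂) with det(α) = 1, α ≠ ±1, and tr(α) ∈ {−1, 0, 1}. Then there is no ordered pair (C₁, C₂) of cyclic subgroups of (ℚ₂/ℤ₂)² of orders 2^{N₁}, 2^{N₂} with C₁ ∩ C₂ = {0}, α C₁ ⊆ C₁, and α C₂ ⊆ C₂. -/

import Mathlib

/-!
If `α` maps the cyclic group `⟨g⟩` of order `2^N` into itself then `α g = k g` for some
`k ∈ ℤ`. Writing `g = y / 2^N` with `y ∈ ℤ₂²` primitive, `(α - k) y ≡ 0 mod 2^N`, so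
`det (k - α) = k² - tr(α) k + 1 ≡ 0 mod 2^N`. Replacing `g` by `2^(N-2) g` when `N ≥ 2`, this
is impossible modulo `4` for `tr α ∈ {-1, 0, 1}`. Hence `N₁ = N₂ = 1`, and `α mod 2` has two
distinct nonzero eigenvectors in `𝔽₂²`, so `α ≡ 1 mod 2`. Then `tr α` is even, hence `0`, and
writing `α = 1 + 2β` gives `det α = 1 + 2 tr β + 4 det β ≡ 3 mod 4`, a contradiction.
-/

noncomputable section

/-- The lattice `ℤ₂ × ℤ₂` inside `ℚ₂ × ℚ₂`, as an additive subgroup. -/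
def intLattice : AddSubgroup (ℚ_[2] × ℚ_[2]) where
  carrier := {x | ‖x.1‖ ≤ 1 ∧ ‖x.2‖ ≤ 1}
  zero_mem' := by simp
  add_mem' := by
    rintro a b ⟨ha1, ha2⟩ ⟨hb1, hb2⟩
    exact ⟨le_trans (Padic.nonarchimedean _ _) (max_le ha1 hb1),
      le_trans (Padic.nonarchimedean _ _) (max_le ha2 hb2)⟩
  neg_mem' := by
    rintro a ⟨h1, h2⟩
    exact ⟨by simpa using h1, by simpa using h2⟩

/-- `E[2^∞] = (ℚ₂/ℤ₂)²`, realized as the quotient of `ℚ₂ × ℚ₂` by `ℤ₂ × ℤ₂`. -/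
def PruferSq : Type := (ℚ_[2] × ℚ_[2]) ⧸ intLattice

instance : AddCommGroup PruferSq := QuotientAddGroup.Quotient.addCommGroup intLattice

/-- A subgroup `C` of `E[2^∞]` is cyclic of order `n` if it is generated by a
single element of order `n`. -/
def IsCyclicOfOrder (C : AddSubgroup PruferSq) (n : ℕ) : Prop :=
  ∃ g : PruferSq, addOrderOf g = n ∧ C = AddSubgroup.zmultiples g

/-- `L_{N₁,N₂}`: ordered pairs of cyclic subgroups of `E[2^∞]` of orders
`2^{N₁}`, `2^{N₂}` intersecting trivially. -/
def cyclicPairs (N₁ N₂ : ℕ) : Set (AddSubgroup PruferSq × AddSubgroup PruferSq) :=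
  {p | IsCyclicOfOrder p.1 (2 ^ N₁) ∧ IsCyclicOfOrder p.2 (2 ^ N₂) ∧ p.1 ⊓ p.2 = ⊥}

end

noncomputable section

/-- The linear action of a `2`-adic integral `2×2` matrix on `ℚ₂ × ℚ₂`. -/
def matAct (α : Matrix (Fin 2) (Fin 2) ℤ_[2]) : (ℚ_[2] × ℚ_[2]) →+ (ℚ_[2] × ℚ_[2]) where
  toFun x := ((α 0 0 : ℚ_[2]) * x.1 + (α 0 1 : ℚ_[2]) * x.2,
              (α 1 0 : ℚ_[2]) * x.1 + (α 1 1 : ℚ_[2]) * x.2)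
  map_zero' := by simp
  map_add' x y := by
    simp only [Prod.fst_add, Prod.snd_add, Prod.mk_add_mk, Prod.mk.injEq]
    constructor <;> ring

lemma matAct_mem (α : Matrix (Fin 2) (Fin 2) ℤ_[2]) {x : ℚ_[2] × ℚ_[2]}
    (hx : x ∈ intLattice) : matAct α x ∈ intLattice := by
  obtain ⟨h1, h2⟩ := hx
  have key : ∀ (a : ℤ_[2]) (t : ℚ_[2]), ‖t‖ ≤ 1 → ‖(a : ℚ_[2]) * t‖ ≤ 1 := by
    intro a t ht
    rw [norm_mul]
    have ha : ‖(a : ℚ_[2])‖ ≤ 1 := by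
      rw [PadicInt.padic_norm_e_of_padicInt]; exact a.norm_le_one
    exact mul_le_one₀ ha (norm_nonneg _) ht
  constructor <;>
    exact le_trans (Padic.nonarchimedean _ _)
      (max_le (key _ _ h1) (key _ _ h2))

/-- The induced action on `E[2^∞] = (ℚ₂/ℤ₂)²`. -/
def pruferAct (α : Matrix (Fin 2) (Fin 2) ℤ_[2]) : PruferSq →+ PruferSq :=
  QuotientAddGroup.map intLattice intLattice (matAct α) (fun _ hx => matAct_mem α hx)

open Matrix

theorem PadicInt.toZModPow_eq_zero_iff_norm_div_le_one {p : ℕ} [Fact p.Prime] (N : ℕ)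
    (y : ℤ_[p]) : toZModPow N y = 0 ↔ ‖(y : ℚ_[p]) / (p : ℚ_[p]) ^ N‖ ≤ 1 := by
  have hp : (0 : ℝ) < (p : ℝ)⁻¹ ^ N := by have := (Fact.out : p.Prime).pos; positivity
  rw [← RingHom.mem_ker, ker_toZModPow, ← norm_le_pow_iff_mem_span_pow, norm_div, norm_pow,
    Padic.norm_p, padic_norm_e_of_padicInt, div_le_one hp, inv_pow, _root_.zpow_neg,
    zpow_natCast]

theorem PadicInt.isUnit_of_toZModPow_one_ne_zero {p : ℕ} [Fact p.Prime] {y : ℤ_[p]}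
    (h : toZModPow 1 y ≠ 0) : IsUnit y := by
  by_contra hy
  rw [← mem_nonunits_iff, mem_nonunits, norm_lt_one_iff_dvd, ← pow_one (p : ℤ_[p]),
    ← Ideal.mem_span_singleton, ← ker_toZModPow] at hy
  exact h hy

theorem AddMonoidHom.exists_zsmul_eq_of_map_zmultiples_le {G : Type*} [AddGroup G]
    {f : G →+ G} {g : G} (h : (AddSubgroup.zmultiples g).map f ≤ AddSubgroup.zmultiples g) :
    ∃ k : ℤ, f g = k • g := by
  obtain ⟨k, hk⟩ := AddSubgroup.mem_zmultiples_iff.mp (h ⟨g, AddSubgroup.mem_zmultiples g, rfl⟩)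
  exact ⟨k, hk.symm⟩

theorem Matrix.det_scalar_sub_eq_zero_of_mulVec_eq_smul {n R : Type*} [Fintype n]
    [DecidableEq n] [CommRing R] {A : Matrix n n R} {v : n → R} {k : R} (h : A *ᵥ v = k • v)
    {i : n} (hi : v i ∈ nonZeroDivisors R) : (scalar n k - A).det = 0 := by
  refine det_eq_zero_of_mulVec_eq_zero_of_mem_nonZeroDivisors ?_ hi
  rw [sub_mulVec, h, scalar_apply, ← smul_one_eq_diagonal, smul_mulVec, one_mulVec, sub_self]

theorem Matrix.det_scalar_sub_fin_two {R : Type*} [CommRing R] (A : Matrix (Fin 2) (Fin 2) R)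
    (k : R) : (scalar (Fin 2) k - A).det = k ^ 2 - A.trace * k + A.det := by
  simp only [det_fin_two, trace_fin_two, Matrix.sub_apply, scalar_apply, diagonal_apply]
  simp only [Fin.isValue, Fin.reduceEq, if_true, if_false]
  ring

def torsionMk (N : ℕ) : (Fin 2 → ℤ_[2]) →+ PruferSq :=
  (QuotientAddGroup.mk' intLattice).comp
    { toFun y := ((y 0 : ℚ_[2]) / 2 ^ N, (y 1 : ℚ_[2]) / 2 ^ N)
      map_zero' := by simp
      map_add' y z := by simp [add_div] }

theorem torsionMk_eq_zero_iff {N : ℕ} {y : Fin 2 → ℤ_[2]} :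
    torsionMk N y = 0 ↔ PadicInt.toZModPow N ∘ y = 0 := by
  refine (QuotientAddGroup.eq_zero_iff _).trans ?_
  rw [funext_iff, Fin.forall_fin_two]
  simp only [Function.comp_apply, Pi.zero_apply,
    PadicInt.toZModPow_eq_zero_iff_norm_div_le_one, Nat.cast_ofNat]
  rfl

theorem torsionMk_eq_iff {N : ℕ} {y z : Fin 2 → ℤ_[2]} :
    torsionMk N y = torsionMk N z ↔ PadicInt.toZModPow N ∘ y = PadicInt.toZModPow N ∘ z := by
  rw [← sub_eq_zero, ← map_sub, torsionMk_eq_zero_iff, ← sub_eq_zero (a := _ ∘ y)]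
  simp only [funext_iff, Function.comp_apply, Pi.sub_apply, map_sub, Pi.zero_apply]

theorem exists_torsionMk_eq {N : ℕ} {g : PruferSq} (hg : 2 ^ N • g = 0) :
    ∃ y, torsionMk N y = g := by
  obtain ⟨x, rfl⟩ := QuotientAddGroup.mk_surjective g
  have hx : 2 ^ N • x ∈ intLattice := by
    rwa [← QuotientAddGroup.eq_zero_iff, QuotientAddGroup.mk_nsmul]
  refine ⟨![⟨2 ^ N * x.1, ?_⟩, ⟨2 ^ N * x.2, ?_⟩], ?_⟩
  · simpa [nsmul_eq_mul] using hx.1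
  · simpa [nsmul_eq_mul] using hx.2
  · change QuotientAddGroup.mk _ = QuotientAddGroup.mk _
    congr 1
    ext <;> simp

theorem two_pow_nsmul_torsionMk (M N : ℕ) (y : Fin 2 → ℤ_[2]) :
    2 ^ M • torsionMk (N + M) y = torsionMk N y := by
  rw [← map_nsmul]
  change QuotientAddGroup.mk _ = QuotientAddGroup.mk _
  congr 1
  ext <;> dsimp only [AddMonoidHom.coe_mk, ZeroHom.coe_mk] <;>
    rw [Pi.smul_apply, nsmul_eq_mul, PadicInt.coe_mul, PadicInt.coe_natCast, Nat.cast_pow,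
      Nat.cast_ofNat, pow_add] <;> field_simp

theorem exists_isUnit_of_addOrderOf_torsionMk {N : ℕ} {y : Fin 2 → ℤ_[2]}
    (h : addOrderOf (torsionMk (N + 1) y) = 2 ^ (N + 1)) : ∃ i, IsUnit (y i) := by
  have hne : torsionMk 1 y ≠ 0 := by
    rw [← two_pow_nsmul_torsionMk N, add_comm, Ne, ← addOrderOf_dvd_iff_nsmul_eq_zero, h]
    exact Nat.pow_dvd_pow_iff_le_right'.not.mpr (by omega)
  rw [Ne, torsionMk_eq_zero_iff, funext_iff, not_forall] at hne
  obtain ⟨i, hi⟩ := hne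
  exact ⟨i, PadicInt.isUnit_of_toZModPow_one_ne_zero hi⟩

theorem pruferAct_torsionMk (α : Matrix (Fin 2) (Fin 2) ℤ_[2]) (N : ℕ) (y : Fin 2 → ℤ_[2]) :
    pruferAct α (torsionMk N y) = torsionMk N (α *ᵥ y) := by
  change QuotientAddGroup.mk (matAct α _) = QuotientAddGroup.mk _
  congr 1
  ext <;> simp only [matAct, AddMonoidHom.coe_mk, ZeroHom.coe_mk, mulVec_fin_two, PadicInt.coe_add,
    PadicInt.coe_mul, cons_val_zero, cons_val_one, cons_val_fin_one] <;> ring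

theorem mulVec_toZModPow_of_pruferAct_eq {α : Matrix (Fin 2) (Fin 2) ℤ_[2]} {N : ℕ}
    {y : Fin 2 → ℤ_[2]} {k : ℤ} (h : pruferAct α (torsionMk N y) = k • torsionMk N y) :
    α.map (PadicInt.toZModPow N) *ᵥ (PadicInt.toZModPow N ∘ y)
      = (k : ZMod (2 ^ N)) • (PadicInt.toZModPow N ∘ y) := by
  rw [pruferAct_torsionMk, ← map_zsmul, torsionMk_eq_iff] at h
  ext i
  rw [← RingHom.map_mulVec, ← Function.comp_apply (f := PadicInt.toZModPow N), h]
  simp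

theorem zmod_four_sq_sub_mul_add_one_ne_zero :
    ∀ t k : ZMod 4, t ∈ ({-1, 0, 1} : Set (ZMod 4)) → k ^ 2 - t * k + 1 ≠ 0 := by
  decide

set_option maxRecDepth 10000 in
theorem zmod_two_matrix_eq_one_of_two_eigenvectors :
    ∀ (A : Matrix (Fin 2) (Fin 2) (ZMod 2)) (v w : Fin 2 → ZMod 2) (k l : ZMod 2),
      A.det = 1 → v ≠ 0 → w ≠ 0 → v ≠ w → A *ᵥ v = k • v → A *ᵥ w = l • w → A = 1 := by
  decide

set_option maxRecDepth 10000 in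
theorem zmod_four_matrix_trace_not_mem_of_map_eq_one :
    ∀ B : Matrix (Fin 2) (Fin 2) (ZMod 4),
      (ZMod.castHom (show 2 ∣ 4 by norm_num) (ZMod 2)).mapMatrix B = 1 → B.det = 1 →
        B.trace ∉ ({-1, 0, 1} : Set (ZMod 4)) := by
  decide

section

variable {α : Matrix (Fin 2) (Fin 2) ℤ_[2]}

theorem trace_map_toZModPow_mem (N : ℕ) (htr : α.trace ∈ ({-1, 0, 1} : Set ℤ_[2])) :
    (α.map (PadicInt.toZModPow N)).trace ∈ ({-1, 0, 1} : Set (ZMod (2 ^ N))) := by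
  simp only [Set.mem_insert_iff, Set.mem_singleton_iff] at htr ⊢
  rw [← AddMonoidHom.map_trace]
  rcases htr with h | h | h <;> simp [h]

theorem det_map_toZModPow (N : ℕ) (hdet : α.det = 1) :
    (α.map (PadicInt.toZModPow N)).det = 1 := by
  rw [← RingHom.mapMatrix_apply, ← RingHom.map_det, hdet, map_one]

theorem pruferAct_ne_zsmul_of_addOrderOf_eq_four (hdet : α.det = 1)
    (htr : α.trace ∈ ({-1, 0, 1} : Set ℤ_[2])) {g : PruferSq} (hg : addOrderOf g = 4) (k : ℤ) :
    pruferAct α g ≠ k • g := by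
  intro hk
  obtain ⟨y, rfl⟩ := exists_torsionMk_eq (N := 2) (hg ▸ addOrderOf_nsmul_eq_zero g)
  obtain ⟨i, hi⟩ := exists_isUnit_of_addOrderOf_torsionMk (N := 1) hg
  have hroot := det_scalar_sub_eq_zero_of_mulVec_eq_smul (mulVec_toZModPow_of_pruferAct_eq hk)
    (hi.map (PadicInt.toZModPow 2)).mem_nonZeroDivisors
  rw [det_scalar_sub_fin_two, det_map_toZModPow 2 hdet] at hroot
  exact zmod_four_sq_sub_mul_add_one_ne_zero _ _ (trace_map_toZModPow_mem 2 htr) hroot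

theorem pruferAct_ne_zsmul_of_addOrderOf_eq_two_pow (hdet : α.det = 1)
    (htr : α.trace ∈ ({-1, 0, 1} : Set ℤ_[2])) {N : ℕ} (hN : 2 ≤ N) {g : PruferSq}
    (hg : addOrderOf g = 2 ^ N) (k : ℤ) : pruferAct α g ≠ k • g := by
  intro hk
  refine pruferAct_ne_zsmul_of_addOrderOf_eq_four hdet htr (g := 2 ^ (N - 2) • g) ?_ k ?_
  · rw [addOrderOf_nsmul_of_dvd (by positivity) (hg ▸ pow_dvd_pow 2 (by omega)), hg,
      Nat.pow_div (by omega) two_pos, show N - (N - 2) = 2 by omega]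
    rfl
  · rw [map_nsmul, hk, smul_comm]

theorem map_toZModPow_one_eq_one_of_addOrderOf_eq_two (hdet : α.det = 1) {g₁ g₂ : PruferSq}
    (h₁ : addOrderOf g₁ = 2) (h₂ : addOrderOf g₂ = 2) (hne : g₁ ≠ g₂) {k₁ k₂ : ℤ}
    (hk₁ : pruferAct α g₁ = k₁ • g₁) (hk₂ : pruferAct α g₂ = k₂ • g₂) :
    α.map (PadicInt.toZModPow 1) = 1 := by
  obtain ⟨y₁, rfl⟩ := exists_torsionMk_eq (N := 1) (h₁ ▸ addOrderOf_nsmul_eq_zero g₁)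
  obtain ⟨y₂, rfl⟩ := exists_torsionMk_eq (N := 1) (h₂ ▸ addOrderOf_nsmul_eq_zero g₂)
  refine zmod_two_matrix_eq_one_of_two_eigenvectors _ _ _ _ _ (det_map_toZModPow 1 hdet)
    ?_ ?_ (mt torsionMk_eq_iff.mpr hne) (mulVec_toZModPow_of_pruferAct_eq hk₁)
    (mulVec_toZModPow_of_pruferAct_eq hk₂)
  · intro h
    simp [torsionMk_eq_zero_iff.mpr h] at h₁
  · intro h
    simp [torsionMk_eq_zero_iff.mpr h] at h₂

theorem map_toZModPow_one_ne_one (hdet : α.det = 1)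
    (htr : α.trace ∈ ({-1, 0, 1} : Set ℤ_[2])) : α.map (PadicInt.toZModPow 1) ≠ 1 := by
  intro h
  refine zmod_four_matrix_trace_not_mem_of_map_eq_one (α.map (PadicInt.toZModPow 2)) ?_
    (det_map_toZModPow 2 hdet) (trace_map_toZModPow_mem 2 htr)
  rw [← h]
  ext i j
  exact PadicInt.cast_toZModPow 1 2 (by norm_num) (α i j)

end

theorem no_fixed_independent_pair_general (N₁ N₂ : ℕ) (hN : 2 ≤ N₁ + N₂)
    (α : Matrix (Fin 2) (Fin 2) ℤ_[2]) (hdet : α.det = 1)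
    (htr : α.trace ∈ ({-1, 0, 1} : Set ℤ_[2])) :
    ¬ ∃ C₁ C₂ : AddSubgroup PruferSq, (C₁, C₂) ∈ cyclicPairs N₁ N₂ ∧
      AddSubgroup.map (pruferAct α) C₁ ≤ C₁ ∧
      AddSubgroup.map (pruferAct α) C₂ ≤ C₂ := by
  rintro ⟨C₁, C₂, ⟨⟨g₁, hg₁, rfl⟩, ⟨g₂, hg₂, rfl⟩, hinf⟩, hs₁, hs₂⟩
  obtain ⟨k₁, hk₁⟩ := AddMonoidHom.exists_zsmul_eq_of_map_zmultiples_le hs₁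
  obtain ⟨k₂, hk₂⟩ := AddMonoidHom.exists_zsmul_eq_of_map_zmultiples_le hs₂
  rcases le_or_gt 2 N₁ with h₁ | h₁
  · exact pruferAct_ne_zsmul_of_addOrderOf_eq_two_pow hdet htr h₁ hg₁ k₁ hk₁
  rcases le_or_gt 2 N₂ with h₂ | h₂
  · exact pruferAct_ne_zsmul_of_addOrderOf_eq_two_pow hdet htr h₂ hg₂ k₂ hk₂
  obtain rfl : N₁ = 1 := by omega
  obtain rfl : N₂ = 1 := by omega
  have hne : g₁ ≠ g₂ := by
    rintro rfl
    rw [inf_idem, AddSubgroup.zmultiples_eq_bot] at hinf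
    simp [hinf] at hg₁
  exact map_toZModPow_one_ne_one hdet htr
    (map_toZModPow_one_eq_one_of_addOrderOf_eq_two hdet hg₁ hg₂ hne hk₁ hk₂)

/-- let `N₁ + N₂ ≥ 2` and let `α ∈ GL₂(ℤ₂)` with `det α = 1`,
`α ≠ ±1`, `tr α ∈ {−1,0,1}`. Then there is no ordered pair `(C₁, C₂)` of cyclic
subgroups of `(ℚ₂/ℤ₂)²` of orders `2^{N₁}, 2^{N₂}` with trivial intersection and
`α C₁ ⊆ C₁`, `α C₂ ⊆ C₂`. -/
theorem no_fixed_independent_pair (N₁ N₂ : ℕ) (hN : 2 ≤ N₁ + N₂)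
    (α : Matrix (Fin 2) (Fin 2) ℤ_[2]) (hdet : α.det = 1)
    (hne1 : α ≠ 1) (hne2 : α ≠ -1) (htr : α.trace ∈ ({-1, 0, 1} : Set ℤ_[2])) :
    ¬ ∃ C₁ C₂ : AddSubgroup PruferSq, (C₁, C₂) ∈ cyclicPairs N₁ N₂ ∧
      AddSubgroup.map (pruferAct α) C₁ ≤ C₁ ∧
      AddSubgroup.map (pruferAct α) C₂ ≤ C₂ :=
  no_fixed_independent_pair_general N₁ N₂ hN α hdet htr

end
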